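/- arXiv:math/0202245 — 2 statements merged into one kernel-verified Lean document; each statement's English description precedes it below -/
import Mathlib

section
/- Let h₁,…,hₙ, κ ∈ ℂ and φ, ψ ∈ ℂⁿ with φᵢ ≠ 0, and suppose hᵢ − hⱼ + κ ≠ 0 for all i, j. Let g ∈ Mₙ(ℂ) satisfy (hᵢ − hⱼ) g_{ij} = φᵢ Σₖ ψₖ g_{kj} − κ g_{ij} for all i, j, and assume κ ≠ 0. Then for all i, j: g_{ij} = φᵢ φⱼ⁻¹ κ g_{jj} / (hᵢ − hⱼ + κ). -/
theorem stmt_7 {n : ℕ} (h φ ψ : Fin n → ℂ) (κ : ℂ)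
    (hφ : ∀ i, φ i ≠ 0) (hden : ∀ i j, h i - h j + κ ≠ 0) (hκ : κ ≠ 0)
    (g : Matrix (Fin n) (Fin n) ℂ)
    (hg : ∀ i j, (h i - h j) * g i j = φ i * (∑ k, ψ k * g k j) - κ * g i j) :
    ∀ i j, g i j = φ i * (φ j)⁻¹ * κ * g j j / (h i - h j + κ) := by
  intro i j
  have hj := hg j j
  have hij := hg i j
  have hS : φ j * (∑ k, ψ k * g k j) = κ * g j j := by ring_nf at hj ⊢; linear_combination -hj
  have key : (h i - h j + κ) * g i j = φ i * (∑ k, ψ k * g k j) := by linear_combination hij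
  have key2 : φ j * ((h i - h j + κ) * g i j) = φ i * (κ * g j j) := by
    calc φ j * ((h i - h j + κ) * g i j) = φ i * (φ j * (∑ k, ψ k * g k j)) := by
          rw [key]; ring
      _ = φ i * (κ * g j j) := by rw [hS]
  rw [eq_div_iff (hden i j)]
  field_simp [hφ j]
  linear_combination key2
end

section
/- Under the hypotheses of the previous statement, if additionally for some j the sum sⱼ = Σₖ ψₖ g_{kj} is nonzero, then Σᵢ φᵢ ψᵢ / (hᵢ − hⱼ + κ) = 1. -/
theorem stmt_8 {n : ℕ} (h φ ψ : Fin n → ℂ) (κ : ℂ)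
    (hφ : ∀ i, φ i ≠ 0) (hden : ∀ i j, h i - h j + κ ≠ 0) (hκ : κ ≠ 0)
    (g : Matrix (Fin n) (Fin n) ℂ)
    (hg : ∀ i j, (h i - h j) * g i j = φ i * (∑ k, ψ k * g k j) - κ * g i j)
    (j : Fin n) (hs : (∑ k, ψ k * g k j) ≠ 0) :
    ∑ i, φ i * ψ i / (h i - h j + κ) = 1 := by
  set s : ℂ := ∑ k, ψ k * g k j with hsdef
  have hgv : ∀ i, g i j = φ i * s / (h i - h j + κ) := by
    intro i
    have := hg i j
    rw [eq_div_iff (hden i j)]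
    linear_combination this
  have key : s = (∑ i, φ i * ψ i / (h i - h j + κ)) * s := by
    calc s = ∑ k, ψ k * (φ k * s / (h k - h j + κ)) := by
            rw [hsdef]; exact Finset.sum_congr rfl fun k _ => by rw [hgv k]
      _ = (∑ i, φ i * ψ i / (h i - h j + κ)) * s := by
            rw [Finset.sum_mul]
            exact Finset.sum_congr rfl fun k _ => by ring
  have h1 : (∑ i, φ i * ψ i / (h i - h j + κ)) * s = 1 * s := by
    rw [one_mul, ← key]
  exact mul_right_cancel₀ hs h1
end
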